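/- arXiv:2407.16843 — 4 statements merged into one kernel-verified Lean document; each statement's English description precedes it below -/
import Mathlib

section
/- Let ρ > 0 and z ∈ ℝ, and fix z₀ ∈ ℝ. The function u(z,ρ) = √(ρ² + (z−z₀)²) − (z−z₀)·log((√(ρ² + (z−z₀)²) + (z−z₀))/ρ) satisfies the axi-symmetric harmonic equation u_ρρ + u_zz + u_ρ/ρ = 0 on the open upper half plane {ρ > 0}. -/
open Real Filter

private lemma bg_sqrt_pos (w s : ℝ) (hs : 0 < s) : 0 < Real.sqrt (s ^ 2 + w ^ 2) :=
  Real.sqrt_pos.mpr (by positivity)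

private lemma bg_sqrt_add_pos (w s : ℝ) (hs : 0 < s) : 0 < Real.sqrt (s ^ 2 + w ^ 2) + w := by
  have h1 : |w| < Real.sqrt (s ^ 2 + w ^ 2) := by
    rw [← Real.sqrt_sq_eq_abs]
    exact Real.sqrt_lt_sqrt (sq_nonneg w) (by nlinarith)
  have := neg_abs_le w
  linarith

private lemma bg_sq_sqrt (w s : ℝ) (hs : 0 < s) :
    Real.sqrt (s ^ 2 + w ^ 2) ^ 2 = s ^ 2 + w ^ 2 :=
  Real.sq_sqrt (by positivity)

private lemma bg_hasDerivAt_sqrt (w s : ℝ) (hs : 0 < s) :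
    HasDerivAt (fun x => Real.sqrt (x ^ 2 + w ^ 2)) (s / Real.sqrt (s ^ 2 + w ^ 2)) s := by
  have h1 : HasDerivAt (fun x : ℝ => x ^ 2 + w ^ 2) (2 * s) s := by
    simpa using (hasDerivAt_pow 2 s).add_const (w ^ 2)
  have h2 := h1.sqrt (by positivity)
  convert h2 using 1
  have hr := bg_sqrt_pos w s hs
  field_simp

/-- First derivative in the ρ direction: u_ρ = √(s²+w²)/s. -/
private lemma bg_deriv_rho (w s : ℝ) (hs : 0 < s) :
    HasDerivAt (fun x => Real.sqrt (x ^ 2 + w ^ 2) -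
        w * Real.log ((Real.sqrt (x ^ 2 + w ^ 2) + w) / x))
      (Real.sqrt (s ^ 2 + w ^ 2) / s) s := by
  set r := Real.sqrt (s ^ 2 + w ^ 2) with hrdef
  have hr : 0 < r := bg_sqrt_pos w s hs
  have hrw : 0 < r + w := bg_sqrt_add_pos w s hs
  have hrsq : r ^ 2 = s ^ 2 + w ^ 2 := bg_sq_sqrt w s hs
  have hsq := bg_hasDerivAt_sqrt w s hs
  have hlog1 : HasDerivAt (fun x => Real.log (Real.sqrt (x ^ 2 + w ^ 2) + w))
      ((s / r) / (r + w)) s := by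
    have := ((bg_hasDerivAt_sqrt w s hs).add_const w).log (ne_of_gt hrw)
    simpa using this
  have hlog2 : HasDerivAt (fun x : ℝ => Real.log x) (1 / s) s := by
    simpa using Real.hasDerivAt_log (ne_of_gt hs)
  have hg : HasDerivAt (fun x => Real.sqrt (x ^ 2 + w ^ 2) -
      w * (Real.log (Real.sqrt (x ^ 2 + w ^ 2) + w) - Real.log x))
      (s / r - w * ((s / r) / (r + w) - 1 / s)) s :=
    hsq.sub ((hlog1.sub hlog2).const_mul w)
  have heq : (fun x => Real.sqrt (x ^ 2 + w ^ 2) -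
      w * Real.log ((Real.sqrt (x ^ 2 + w ^ 2) + w) / x)) =ᶠ[nhds s]
      (fun x => Real.sqrt (x ^ 2 + w ^ 2) -
      w * (Real.log (Real.sqrt (x ^ 2 + w ^ 2) + w) - Real.log x)) := by
    filter_upwards [eventually_gt_nhds hs] with x hx
    rw [Real.log_div (ne_of_gt (bg_sqrt_add_pos w x hx)) (ne_of_gt hx)]
  have hfin := hg.congr_of_eventuallyEq heq
  refine hfin.congr_deriv (Eq.symm ?_)
  field_simp
  linear_combination r * hrsq

/-- Derivative in the z direction: u_z = -(log(r+w) - log ρ). -/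
private lemma bg_deriv_z (z₀ ρ : ℝ) (hρ : 0 < ρ) (t : ℝ) :
    HasDerivAt (fun t' => Real.sqrt (ρ ^ 2 + (t' - z₀) ^ 2) -
        (t' - z₀) * Real.log ((Real.sqrt (ρ ^ 2 + (t' - z₀) ^ 2) + (t' - z₀)) / ρ))
      (-(Real.log (Real.sqrt (ρ ^ 2 + (t - z₀) ^ 2) + (t - z₀)) - Real.log ρ)) t := by
  have key : ∀ s : ℝ, 0 < Real.sqrt (ρ ^ 2 + (s - z₀) ^ 2) + (s - z₀) := by
    intro s
    have h1 : |s - z₀| < Real.sqrt (ρ ^ 2 + (s - z₀) ^ 2) := by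
      rw [← Real.sqrt_sq_eq_abs]
      exact Real.sqrt_lt_sqrt (sq_nonneg _) (by nlinarith)
    have := neg_abs_le (s - z₀)
    linarith
  set w := t - z₀ with hw
  set r := Real.sqrt (ρ ^ 2 + w ^ 2) with hrdef
  have hr : 0 < r := Real.sqrt_pos.mpr (by positivity)
  have hrw : 0 < r + w := key t
  have hrsq : r ^ 2 = ρ ^ 2 + w ^ 2 := Real.sq_sqrt (by positivity)
  have hv : HasDerivAt (fun t' : ℝ => t' - z₀) 1 t := (hasDerivAt_id t).sub_const z₀
  have hsq : HasDerivAt (fun t' => Real.sqrt (ρ ^ 2 + (t' - z₀) ^ 2)) (w / r) t := by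
    have h1 : HasDerivAt (fun t' : ℝ => ρ ^ 2 + (t' - z₀) ^ 2) (2 * w) t := by
      have := (hv.pow 2).const_add (ρ ^ 2)
      simpa [hw] using this
    have h2 := h1.sqrt (by rw [← hrsq]; positivity)
    convert h2 using 1
    rw [← hrdef]; field_simp
  have hlog : HasDerivAt (fun t' => Real.log (Real.sqrt (ρ ^ 2 + (t' - z₀) ^ 2) + (t' - z₀)))
      ((w / r + 1) / (r + w)) t := by
    have := (hsq.add hv).log (ne_of_gt hrw)
    simpa using this
  have hprod : HasDerivAt (fun t' => (t' - z₀) *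
      (Real.log (Real.sqrt (ρ ^ 2 + (t' - z₀) ^ 2) + (t' - z₀)) - Real.log ρ))
      (1 * (Real.log (r + w) - Real.log ρ) + w * ((w / r + 1) / (r + w))) t :=
    hv.mul (hlog.sub_const (Real.log ρ))
  have hg := hsq.sub hprod
  have heq : (fun t' => Real.sqrt (ρ ^ 2 + (t' - z₀) ^ 2) -
        (t' - z₀) * Real.log ((Real.sqrt (ρ ^ 2 + (t' - z₀) ^ 2) + (t' - z₀)) / ρ)) =
      (fun t' => Real.sqrt (ρ ^ 2 + (t' - z₀) ^ 2) -
        (t' - z₀) * (Real.log (Real.sqrt (ρ ^ 2 + (t' - z₀) ^ 2) + (t' - z₀)) - Real.log ρ)) := by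
    funext s
    rw [Real.log_div (ne_of_gt (key s)) (ne_of_gt hρ)]
  rw [heq]
  refine hg.congr_deriv (Eq.symm ?_)
  have h3 : (w / r + 1) / (r + w) = 1 / r := by
    rw [div_eq_div_iff (ne_of_gt hrw) (ne_of_gt hr)]
    field_simp; ring
  rw [h3]
  field_simp; ring

/-- The basic Biquard–Gauduchon building block is axi-symmetric harmonic on {ρ > 0}. -/
theorem stmt0 (z₀ : ℝ) (z ρ : ℝ) (hρ : 0 < ρ) :
    let u : ℝ → ℝ → ℝ := fun z ρ =>
      Real.sqrt (ρ ^ 2 + (z - z₀) ^ 2) -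
        (z - z₀) * Real.log ((Real.sqrt (ρ ^ 2 + (z - z₀) ^ 2) + (z - z₀)) / ρ)
    deriv (fun s => deriv (fun s' => u z s') s) ρ +
      deriv (fun t => deriv (fun t' => u t' ρ) t) z +
      deriv (fun s => u z s) ρ / ρ = 0 := by
  intro u
  set w := z - z₀ with hw
  set r := Real.sqrt (ρ ^ 2 + w ^ 2) with hrdef
  have hr : 0 < r := bg_sqrt_pos w ρ hρ
  have hrw : 0 < r + w := bg_sqrt_add_pos w ρ hρ
  have hrsq : r ^ 2 = ρ ^ 2 + w ^ 2 := bg_sq_sqrt w ρ hρ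
  -- third term
  have h3 : deriv (fun s => u z s) ρ = r / ρ := (bg_deriv_rho w ρ hρ).deriv
  -- first term
  have h1 : deriv (fun s => deriv (fun s' => u z s') s) ρ =
      ((ρ / r) * ρ - r * 1) / ρ ^ 2 := by
    have heq : (fun s => deriv (fun s' => u z s') s) =ᶠ[nhds ρ]
        (fun s => Real.sqrt (s ^ 2 + w ^ 2) / s) := by
      filter_upwards [eventually_gt_nhds hρ] with x hx
      exact (bg_deriv_rho w x hx).deriv
    rw [heq.deriv_eq]
    exact ((bg_hasDerivAt_sqrt w ρ hρ).div (hasDerivAt_id ρ) (ne_of_gt hρ)).deriv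
  -- second term
  have h2 : deriv (fun t => deriv (fun t' => u t' ρ) t) z = -(1 / r) := by
    have heq : (fun t => deriv (fun t' => u t' ρ) t) =
        (fun t => -(Real.log (Real.sqrt (ρ ^ 2 + (t - z₀) ^ 2) + (t - z₀)) - Real.log ρ)) := by
      funext t
      exact (bg_deriv_z z₀ ρ hρ t).deriv
    rw [heq]
    have hsq : HasDerivAt (fun t' => Real.sqrt (ρ ^ 2 + (t' - z₀) ^ 2)) (w / r) z := by
      have hv : HasDerivAt (fun t' : ℝ => t' - z₀) 1 z := (hasDerivAt_id z).sub_const z₀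
      have hstep : HasDerivAt (fun t' : ℝ => ρ ^ 2 + (t' - z₀) ^ 2) (2 * w) z := by
        have := (hv.pow 2).const_add (ρ ^ 2)
        simpa [hw] using this
      have h2' := hstep.sqrt (by rw [← hrsq]; positivity)
      convert h2' using 1
      rw [← hw, ← hrdef]; field_simp
    have hv : HasDerivAt (fun t' : ℝ => t' - z₀) 1 z := (hasDerivAt_id z).sub_const z₀
    have hlog : HasDerivAt
        (fun t' => Real.log (Real.sqrt (ρ ^ 2 + (t' - z₀) ^ 2) + (t' - z₀)))
        ((w / r + 1) / (r + w)) z := by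
      have := (hsq.add hv).log (ne_of_gt hrw)
      simpa using this
    have hfin := ((hlog.sub_const (Real.log ρ)).neg).deriv
    rw [show (fun t => -(Real.log (Real.sqrt (ρ ^ 2 + (t - z₀) ^ 2) + (t - z₀)) - Real.log ρ)) = -(fun x => Real.log (Real.sqrt (ρ ^ 2 + (x - z₀) ^ 2) + (x - z₀)) - Real.log ρ) from rfl, hfin]
    rw [neg_inj, div_eq_div_iff (ne_of_gt hrw) (ne_of_gt hr)]
    field_simp; ring
  rw [h1, h2, h3]
  rw [hw] at hrsq
  have hr' : (0:ℝ) < r := hr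
  clear_value r
  field_simp
  nlinarith [hrsq]
end

section
/- Let U : ℝ × (0,∞) → ℝ be smooth and satisfy the 3-dimensional axi-symmetric harmonic equation U_ρρ + U_zz + U_ρ/ρ = 0. Then the function γ(z,ρ) = U_ρ(z,ρ)/ρ satisfies the 5-dimensional axi-symmetric harmonic equation γ_ρρ + γ_zz + 3·γ_ρ/ρ = 0 on ℝ × (0,∞). -/
open Set Filter Topology

noncomputable section Aux

abbrev SS : Set (ℝ×ℝ) := Set.univ ×ˢ Set.Ioi (0:ℝ)

lemma hSopen : IsOpen SS := isOpen_univ.prod isOpen_Ioi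

lemma memS {t r : ℝ} (hr : 0 < r) : (t,r) ∈ SS := ⟨trivial, hr⟩

lemma diffAt {Φ : ℝ×ℝ → ℝ} (hΦ : ContDiffOn ℝ (⊤ : ℕ∞) Φ SS) {t r : ℝ} (hr : 0 < r) :
    DifferentiableAt ℝ Φ (t,r) :=
  (hΦ.contDiffAt (hSopen.mem_nhds (memS hr))).differentiableAt (by norm_num)

lemma slice1 {Φ : ℝ×ℝ → ℝ} {t r : ℝ} (h : DifferentiableAt ℝ Φ (t,r)) :
    HasDerivAt (fun x => Φ (x, r)) (fderiv ℝ Φ (t,r) (1,0)) t :=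
  h.hasFDerivAt.comp_hasDerivAt t ((hasDerivAt_id t).prodMk (hasDerivAt_const t r))

lemma slice2 {Φ : ℝ×ℝ → ℝ} {t r : ℝ} (h : DifferentiableAt ℝ Φ (t,r)) :
    HasDerivAt (fun x => Φ (t, x)) (fderiv ℝ Φ (t,r) (0,1)) r :=
  h.hasFDerivAt.comp_hasDerivAt r ((hasDerivAt_const r t).prodMk (hasDerivAt_id r))

lemma smooth_pd {Φ : ℝ×ℝ → ℝ} (hΦ : ContDiffOn ℝ (⊤ : ℕ∞) Φ SS) (v : ℝ×ℝ) :
    ContDiffOn ℝ (⊤ : ℕ∞) (fun p => fderiv ℝ Φ p v) SS := by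
  have h1 : ContDiffOn ℝ (⊤ : ℕ∞) (fderiv ℝ Φ) SS :=
    hΦ.fderiv_of_isOpen hSopen (le_of_eq (by rfl))
  exact (ContinuousLinearMap.apply ℝ ℝ v).contDiff.comp_contDiffOn h1

lemma hasFDeriv_pd {Φ : ℝ×ℝ → ℝ} (hΦ : ContDiffOn ℝ (⊤ : ℕ∞) Φ SS) {t r : ℝ} (hr : 0 < r)
    (v : ℝ×ℝ) :
    HasFDerivAt (fun q => fderiv ℝ Φ q v)
      ((ContinuousLinearMap.apply ℝ ℝ v).comp (fderiv ℝ (fderiv ℝ Φ) (t,r))) (t,r) := by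
  have h : DifferentiableAt ℝ (fderiv ℝ Φ) (t,r) :=
    ((hΦ.contDiffAt (hSopen.mem_nhds (memS hr))).fderiv_right (m := (⊤ : ℕ∞))
      (le_of_eq (by rfl))).differentiableAt (by norm_num)
  exact ((ContinuousLinearMap.apply ℝ ℝ v).hasFDerivAt).comp (t,r) h.hasFDerivAt

lemma symm_pd {Φ : ℝ×ℝ → ℝ} (hΦ : ContDiffOn ℝ (⊤ : ℕ∞) Φ SS) {t r : ℝ} (hr : 0 < r)
    (v w : ℝ×ℝ) :
    fderiv ℝ (fun q => fderiv ℝ Φ q v) (t,r) w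
      = fderiv ℝ (fun q => fderiv ℝ Φ q w) (t,r) v := by
  rw [(hasFDeriv_pd hΦ hr v).fderiv, (hasFDeriv_pd hΦ hr w).fderiv]
  simp only [ContinuousLinearMap.comp_apply, ContinuousLinearMap.apply_apply]
  exact (hΦ.contDiffAt (hSopen.mem_nhds (memS hr))).isSymmSndFDerivAt
    (by rw [minSmoothness_of_isRCLikeNormedField]; exact WithTop.coe_le_coe.2 le_top) w v

/-- first partial derivative -/
abbrev pdz (Φ : ℝ×ℝ → ℝ) : ℝ×ℝ → ℝ := fun p => fderiv ℝ Φ p (1,0)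

/-- second partial derivative -/
abbrev pdr (Φ : ℝ×ℝ → ℝ) : ℝ×ℝ → ℝ := fun p => fderiv ℝ Φ p (0,1)

end Aux

/-- If U is axi-symmetric harmonic in 3d then γ = U_ρ/ρ is axi-symmetric harmonic in 5d. -/
theorem stmt3 (U : ℝ → ℝ → ℝ)
    (hU : ContDiffOn ℝ (⊤ : ℕ∞) (fun p : ℝ × ℝ => U p.1 p.2) (Set.univ ×ˢ Set.Ioi (0 : ℝ)))
    (heq : ∀ z ρ : ℝ, 0 < ρ →
      deriv (fun s => deriv (U z) s) ρ +
        deriv (fun t => deriv (fun t' => U t' ρ) t) z + deriv (U z) ρ / ρ = 0) :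
    ∀ z ρ : ℝ, 0 < ρ →
      deriv (fun s => deriv (fun s' => deriv (U z) s' / s') s) ρ +
        deriv (fun t => deriv (fun t' => deriv (U t') ρ / ρ) t) z +
        3 * (deriv (fun s => deriv (U z) s / s) ρ) / ρ = 0 := by
  intro z ρ hρ
  set F : ℝ×ℝ → ℝ := fun p => U p.1 p.2 with hFdef
  have hF : ContDiffOn ℝ (⊤ : ℕ∞) F SS := hU.of_le (by simp)
  have hG : ContDiffOn ℝ (⊤ : ℕ∞) (pdr F) SS := smooth_pd hF _
  have hH : ContDiffOn ℝ (⊤ : ℕ∞) (pdz F) SS := smooth_pd hF _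
  have hG2 : ContDiffOn ℝ (⊤ : ℕ∞) (pdr (pdr F)) SS := smooth_pd hG _
  have hG1 : ContDiffOn ℝ (⊤ : ℕ∞) (pdz (pdr F)) SS := smooth_pd hG _
  have hH1 : ContDiffOn ℝ (⊤ : ℕ∞) (pdz (pdz F)) SS := smooth_pd hH _
  -- basic slice facts
  have e1 : ∀ t r : ℝ, 0 < r → HasDerivAt (U t) (pdr F (t,r)) r :=
    fun t r hr => slice2 (diffAt hF hr)
  have e2 : ∀ t r : ℝ, 0 < r → HasDerivAt (fun t' => U t' r) (pdz F (t,r)) t :=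
    fun t r hr => slice1 (diffAt hF hr)
  -- ψ = G(z,·)/id and its derivative
  have hψ : ∀ s : ℝ, 0 < s → HasDerivAt (fun x => pdr F (z,x) / x)
      ((pdr (pdr F) (z,s) * s - pdr F (z,s) * 1) / s^2) s := by
    intro s hs
    exact (slice2 (diffAt hG hs)).div (hasDerivAt_id s) (ne_of_gt hs)
  -- Term 3
  have eq3 : deriv (fun s => deriv (U z) s / s) ρ
      = (pdr (pdr F) (z,ρ) * ρ - pdr F (z,ρ) * 1) / ρ^2 := by
    have hev : (fun s => deriv (U z) s / s) =ᶠ[𝓝 ρ] (fun x => pdr F (z,x) / x) := by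
      filter_upwards [Ioi_mem_nhds hρ] with s hs
      rw [(e1 z s hs).deriv]
    rw [hev.deriv_eq, (hψ ρ hρ).deriv]
  -- Term 1
  have eq1 : deriv (fun s => deriv (fun s' => deriv (U z) s' / s') s) ρ
      = ((pdr (pdr (pdr F)) (z,ρ) * ρ + pdr (pdr F) (z,ρ) * 1 - pdr (pdr F) (z,ρ) * 1) * ρ^2
          - (pdr (pdr F) (z,ρ) * ρ - pdr F (z,ρ) * 1) * (↑2 * ρ^(2-1))) / (ρ^2)^2 := by
    have hev : (fun s => deriv (fun s' => deriv (U z) s' / s') s)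
        =ᶠ[𝓝 ρ] (fun s => (pdr (pdr F) (z,s) * s - pdr F (z,s) * 1) / s^2) := by
      filter_upwards [Ioi_mem_nhds hρ] with s hs
      have hev2 : (fun s' => deriv (U z) s' / s') =ᶠ[𝓝 s] (fun x => pdr F (z,x) / x) := by
        filter_upwards [Ioi_mem_nhds hs] with x hx
        rw [(e1 z x hx).deriv]
      rw [hev2.deriv_eq, (hψ s hs).deriv]
    rw [hev.deriv_eq]
    have hnum : HasDerivAt (fun s => pdr (pdr F) (z,s) * s - pdr F (z,s) * 1)
        (pdr (pdr (pdr F)) (z,ρ) * ρ + pdr (pdr F) (z,ρ) * 1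
          - (pdr (pdr F) (z,ρ) * 1 + pdr F (z,ρ) * 0)) ρ :=
      ((slice2 (diffAt hG2 hρ)).mul (hasDerivAt_id ρ)).sub
        ((slice2 (diffAt hG hρ)).mul (hasDerivAt_const ρ 1))
    have hden : HasDerivAt (fun s : ℝ => s^2) (↑2 * ρ^(2-1)) ρ := hasDerivAt_pow 2 ρ
    have := (hnum.div hden (by positivity)).deriv
    refine this.trans ?_; ring_nf
  -- Term 2
  have eq2 : deriv (fun t => deriv (fun t' => deriv (U t') ρ / ρ) t) z
      = pdz (pdz (pdr F)) (z,ρ) / ρ := by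
    have h1 : (fun t => deriv (fun t' => deriv (U t') ρ / ρ) t)
        = fun t => pdz (pdr F) (t,ρ) / ρ := by
      funext t
      have : (fun t' => deriv (U t') ρ / ρ) = fun t' => pdr F (t',ρ) / ρ := by
        funext t'; rw [(e1 t' ρ hρ).deriv]
      rw [this]
      exact ((slice1 (diffAt hG hρ)).div_const ρ).deriv
    rw [h1]
    exact ((slice1 (diffAt hG1 hρ)).div_const ρ).deriv
  -- differentiate the 3d equation in ρ
  have hφ0 : ∀ s : ℝ, 0 < s →
      pdr (pdr F) (z,s) + pdz (pdz F) (z,s) + pdr F (z,s) / s = 0 := by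
    intro s hs
    have h := heq z s hs
    have ha : deriv (fun s' => deriv (U z) s') s = pdr (pdr F) (z,s) := by
      have hev : (fun s' => deriv (U z) s') =ᶠ[𝓝 s] (fun x => pdr F (z,x)) := by
        filter_upwards [Ioi_mem_nhds hs] with x hx
        rw [(e1 z x hx).deriv]
      rw [hev.deriv_eq]
      exact (slice2 (diffAt hG hs)).deriv
    have hb : deriv (fun t => deriv (fun t' => U t' s) t) z = pdz (pdz F) (z,s) := by
      have h1 : (fun t => deriv (fun t' => U t' s) t) = fun t => pdz F (t,s) := by
        funext t; rw [(e2 t s hs).deriv]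
      rw [h1]
      exact (slice1 (diffAt hH hs)).deriv
    rw [ha, hb, (e1 z s hs).deriv] at h
    exact h
  have key : pdr (pdr (pdr F)) (z,ρ) + pdr (pdz (pdz F)) (z,ρ)
      + (pdr (pdr F) (z,ρ) * ρ - pdr F (z,ρ) * 1) / ρ^2 = 0 := by
    have hd : HasDerivAt (fun s => pdr (pdr F) (z,s) + pdz (pdz F) (z,s) + pdr F (z,s) / s)
        (pdr (pdr (pdr F)) (z,ρ) + pdr (pdz (pdz F)) (z,ρ)
          + (pdr (pdr F) (z,ρ) * ρ - pdr F (z,ρ) * 1) / ρ^2) ρ :=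
      ((slice2 (diffAt hG2 hρ)).add (slice2 (diffAt hH1 hρ))).add
        ((slice2 (diffAt hG hρ)).div (hasDerivAt_id ρ) (ne_of_gt hρ))
    have hev : (fun s => pdr (pdr F) (z,s) + pdz (pdz F) (z,s) + pdr F (z,s) / s)
        =ᶠ[𝓝 ρ] (fun _ => (0:ℝ)) := by
      filter_upwards [Ioi_mem_nhds hρ] with s hs
      exact hφ0 s hs
    have := hd.deriv
    rw [hev.deriv_eq, deriv_const] at this
    linarith [this]
  -- symmetry of mixed partials
  have symA : ∀ t r : ℝ, 0 < r → pdz (pdr F) (t,r) = pdr (pdz F) (t,r) := by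
    intro t r hr
    exact symm_pd hF hr (0,1) (1,0)
  have symB : pdz (pdz (pdr F)) (z,ρ) = pdr (pdz (pdz F)) (z,ρ) := by
    have hev : pdz (pdr F) =ᶠ[𝓝 ((z,ρ) : ℝ×ℝ)] pdr (pdz F) := by
      filter_upwards [hSopen.mem_nhds (memS hρ)] with q hq
      exact symA q.1 q.2 hq.2
    calc pdz (pdz (pdr F)) (z,ρ) = fderiv ℝ (pdz (pdr F)) (z,ρ) (1,0) := rfl
      _ = fderiv ℝ (pdr (pdz F)) (z,ρ) (1,0) := by rw [hev.fderiv_eq]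
      _ = fderiv ℝ (fun q => fderiv ℝ (pdz F) q (1,0)) (z,ρ) (0,1) := symm_pd hH hρ (0,1) (1,0)
      _ = pdr (pdz (pdz F)) (z,ρ) := rfl
  rw [eq1, eq2, eq3, symB]
  have hρ' : ρ ≠ 0 := ne_of_gt hρ
  field_simp at key ⊢
  linear_combination ρ * key
end

section
/- Let γ : ℝ⁵ → ℝ be harmonic (Δγ = 0) and suppose there is a constant C such that γ(w) ≤ C·(1+|w|)/ρ(w)² for all w off the z-axis, where ρ(w) is the distance from w to the z-axis, and suppose γ extends continuously (hence smoothly and harmonically) across the z-axis. Then γ is bounded above on ℝ⁵ by a constant. -/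
open Real Filter Metric
open scoped Topology RealInnerProductSpace

noncomputable section Stmt16Aux

local notation "E5" => EuclideanSpace ℝ (Fin 5)

private def ee (i : Fin 5) : E5 := EuclideanSpace.single i (1 : ℝ)

private lemma inner_ee (y : E5) (i : Fin 5) : ⟪y, ee i⟫ = y i := by
  simp [ee, PiLp.inner_apply, EuclideanSpace.single_apply]

private lemma inner_ee_self (i : Fin 5) : ⟪ee i, ee i⟫ = 1 := by
  rw [inner_ee]; simp [ee, EuclideanSpace.single_apply]

private lemma sum_sq_eq_normsq (y : E5) : ∑ i, (y i) ^ 2 = ‖y‖ ^ 2 := by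
  rw [EuclideanSpace.norm_eq, Real.sq_sqrt (Finset.sum_nonneg fun i _ => sq_nonneg _)]
  simp [Real.norm_eq_abs, sq_abs]

private lemma line_hasDerivAt (x v : E5) (t : ℝ) :
    HasDerivAt (fun s : ℝ => x + s • v) v t := by
  simpa using ((hasDerivAt_id t).smul_const v).const_add x

private lemma sline_hasDerivAt (p x v : E5) (t : ℝ) :
    HasDerivAt (fun s : ℝ => ‖x + s • v - p‖ ^ 2) (2 * ⟪x + t • v - p, v⟫) t :=
  ((line_hasDerivAt x v t).sub_const p).norm_sq

private def Kf (p w : E5) : ℝ := (‖w - p‖ ^ 2) ^ (-3/2 : ℝ)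

private lemma normsq_pos {p y : E5} (h : y ≠ p) : 0 < ‖y - p‖ ^ 2 := by
  have h0 : y - p ≠ 0 := sub_ne_zero.mpr h
  have : 0 < ‖y - p‖ := norm_pos_iff.mpr h0
  positivity

private lemma Kf_pos {p y : E5} (h : y ≠ p) : 0 < Kf p y :=
  Real.rpow_pos_of_pos (normsq_pos h) _

private lemma Kf_hasFDerivAt (p : E5) {y : E5} (h : y ≠ p) :
    HasFDerivAt (Kf p)
      (((-3/2 : ℝ) * (‖y - p‖ ^ 2) ^ (-5/2 : ℝ)) • (2 • innerSL ℝ (y - p))) y := by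
  have hs : ‖y - p‖ ^ 2 ≠ 0 := (normsq_pos h).ne'
  have h1 : HasFDerivAt (fun w : E5 => ‖w - p‖ ^ 2) (2 • innerSL ℝ (y - p)) y := by
    simpa using ((hasFDerivAt_id y).sub_const p).norm_sq
  have h2 := (Real.hasDerivAt_rpow_const (x := ‖y - p‖ ^ 2) (p := (-3/2 : ℝ))
    (Or.inl hs)).comp_hasFDerivAt y h1
  rw [show (-3/2 - 1 : ℝ) = -5/2 by norm_num] at h2
  exact h2

private lemma Kf_fderiv_apply (p : E5) {y : E5} (h : y ≠ p) (v : E5) :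
    fderiv ℝ (Kf p) y v = ((-3/2 : ℝ) * (‖y - p‖ ^ 2) ^ (-5/2 : ℝ)) * (2 * ⟪y - p, v⟫) := by
  rw [(Kf_hasFDerivAt p h).fderiv]
  simp only [ContinuousLinearMap.smul_apply, innerSL_apply_apply, smul_eq_mul]
  ring

/-- value of the second derivative of `Kf p` along direction `v` at `x`. -/
private def d2K (p x v : E5) : ℝ :=
  (2 * ⟪x - p, v⟫) * (-5/2 : ℝ) * (‖x - p‖ ^ 2) ^ (-7/2 : ℝ) * ((-3/2 : ℝ) * (2 * ⟪x - p, v⟫))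
    + ((-3/2 : ℝ) * (‖x - p‖ ^ 2) ^ (-5/2 : ℝ)) * (2 * ⟪v, v⟫)

private lemma KfLine_hasDerivAt (p x v : E5) (h : x ≠ p) :
    HasDerivAt (fun t : ℝ =>
        ((-3/2 : ℝ) * (‖x + t • v - p‖ ^ 2) ^ (-5/2 : ℝ)) * (2 * ⟪x + t • v - p, v⟫))
      (d2K p x v) 0 := by
  have h00 : x + (0:ℝ) • v = x := by simp
  have hs : ‖x + (0:ℝ) • v - p‖ ^ 2 ≠ 0 := by rw [h00]; exact (normsq_pos h).ne'
  have hS := sline_hasDerivAt p x v 0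
  have hrp : HasDerivAt (fun t : ℝ => (‖x + t • v - p‖ ^ 2) ^ (-5/2 : ℝ))
      ((2 * ⟪x + (0:ℝ) • v - p, v⟫) * (-5/2 : ℝ) * (‖x + (0:ℝ) • v - p‖ ^ 2) ^ (-5/2 - 1 : ℝ))
      0 := hS.rpow_const (Or.inl hs)
  have hI : HasDerivAt (fun t : ℝ => ⟪x + t • v - p, v⟫) (⟪v, v⟫) 0 := by
    have := HasDerivAt.inner ℝ ((line_hasDerivAt x v 0).sub_const p) (hasDerivAt_const (0:ℝ) v)
    simpa using this
  have := (hrp.const_mul (-3/2 : ℝ)).mul (hI.const_mul 2)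
  rw [h00] at this
  refine this.congr_deriv ?_
  have : (-5/2 - 1 : ℝ) = -7/2 := by norm_num
  rw [this, d2K]
  ring

private lemma rpow_succ_aux {s : ℝ} (hs : 0 < s) : s ^ (-7/2 : ℝ) * s = s ^ (-5/2 : ℝ) := by
  have := (Real.rpow_add hs (-7/2) 1)
  rw [Real.rpow_one] at this
  rw [← this]
  norm_num

private lemma d2K_trace (p x : E5) (h : x ≠ p) : ∑ i, d2K p x (ee i) = 0 := by
  have hs : (0:ℝ) < ‖x - p‖ ^ 2 := normsq_pos h
  have expand : ∀ i, d2K p x (ee i)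
      = 15 * (‖x - p‖ ^ 2) ^ (-7/2 : ℝ) * ((x - p) i) ^ 2
        + (-3) * (‖x - p‖ ^ 2) ^ (-5/2 : ℝ) := by
    intro i
    rw [d2K, inner_ee, inner_ee_self]
    ring
  rw [Finset.sum_congr rfl fun i _ => expand i, Finset.sum_add_distrib]
  rw [← Finset.mul_sum, sum_sq_eq_normsq, Finset.sum_const]
  simp only [Finset.card_univ, Fintype.card_fin, nsmul_eq_mul]
  have h2 := rpow_succ_aux hs
  nlinarith [h2]

private lemma Nsq_hasFDerivAt (y : E5) :
    HasFDerivAt (fun w : E5 => ‖w‖ ^ 2) (2 • innerSL ℝ y) y := by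
  simpa using (hasFDerivAt_id y).norm_sq

private lemma Nsq_fderiv_apply (y v : E5) :
    fderiv ℝ (fun w : E5 => ‖w‖ ^ 2) y v = 2 * ⟪y, v⟫ := by
  rw [(Nsq_hasFDerivAt y).fderiv]
  simp only [ContinuousLinearMap.smul_apply, innerSL_apply_apply, smul_eq_mul, nsmul_eq_mul,
    Nat.cast_ofNat]

private lemma NsqLine_hasDerivAt (x v : E5) :
    HasDerivAt (fun t : ℝ => 2 * ⟪x + t • v, v⟫) (2 * ⟪v, v⟫) 0 := by
  have := HasDerivAt.inner ℝ (line_hasDerivAt x v 0) (hasDerivAt_const (0:ℝ) v)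
  simpa using this.const_mul 2

private lemma gamma_line {γ : E5 → ℝ} (hsm : ContDiff ℝ (⊤ : ℕ∞) γ) (x v : E5) :
    HasDerivAt (fun t : ℝ => fderiv ℝ γ (x + t • v) v)
      (fderiv ℝ (fderiv ℝ γ) x v v) 0 := by
  have h1 : ContDiff ℝ (⊤ : ℕ∞) (fderiv ℝ γ) := hsm.fderiv_right (by simp)
  have h2 : HasFDerivAt (fderiv ℝ γ) (fderiv ℝ (fderiv ℝ γ) x) x :=
    (h1.differentiable (by simp) x).hasFDerivAt
  have h3 : HasDerivAt (fun t : ℝ => fderiv ℝ γ (x + t • v)) (fderiv ℝ (fderiv ℝ γ) x v) 0 := by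
    exact h2.comp_hasDerivAt_of_eq 0 (line_hasDerivAt x v 0) (by simp)
  have h4 := h3.clm_apply (hasDerivAt_const (0:ℝ) v)
  simpa using h4

/-- Second derivative test: at a local maximum, the second derivative along any line
is nonpositive. -/
private lemma secondDerivTest {f : E5 → ℝ} {x v : E5} {c : ℝ}
    (hd : ∀ᶠ y in 𝓝 x, DifferentiableAt ℝ f y)
    (hc : HasDerivAt (fun t : ℝ => fderiv ℝ f (x + t • v) v) c 0)
    (hmax : IsLocalMax f x) : c ≤ 0 := by
  by_contra hlt
  push_neg at hlt
  set h : ℝ → ℝ := fun t => fderiv ℝ f (x + t • v) v with hh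
  have h00 : h 0 = 0 := by
    have := hmax.fderiv_eq_zero
    simp [hh, this]
  have hslope : Tendsto (slope h 0) (𝓝[≠] 0) (𝓝 c) := hasDerivAt_iff_tendsto_slope.1 hc
  have hmono : 𝓝[>] (0:ℝ) ≤ 𝓝[≠] (0:ℝ) :=
    nhdsWithin_mono 0 fun t ht => ne_of_gt ht
  have hev : ∀ᶠ t in 𝓝[>] (0:ℝ), c/2 < slope h 0 t :=
    (hslope.mono_left hmono).eventually (eventually_gt_nhds (half_lt_self hlt))
  have hpos : ∀ᶠ t in 𝓝[>] (0:ℝ), 0 < h t := by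
    filter_upwards [hev, self_mem_nhdsWithin] with t ht ht0
    have ht0' : (0:ℝ) < t := ht0
    have : slope h 0 t = h t / t := by simp [slope_def_field, h00]
    rw [this] at ht
    have hc2 : 0 < c/2 := half_pos hlt
    have := lt_trans hc2 ht
    exact (div_pos_iff.1 this).resolve_right (fun hx => absurd ht0' (not_lt.2 hx.2.le)) |>.1
  have htend : Tendsto (fun t : ℝ => x + t • v) (𝓝 0) (𝓝 x) := by
    have hco : Continuous fun t : ℝ => x + t • v :=
      continuous_const.add (continuous_id.smul continuous_const)
    simpa using hco.tendsto 0
  have hgle : ∀ᶠ t in 𝓝 (0:ℝ), f (x + t • v) ≤ f x := htend.eventually hmax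
  have hdiff : ∀ᶠ t in 𝓝 (0:ℝ), HasDerivAt (fun s : ℝ => f (x + s • v)) (h t) t := by
    filter_upwards [htend.eventually hd] with t ht
    exact ht.hasFDerivAt.comp_hasDerivAt t (line_hasDerivAt x v t)
  obtain ⟨δ1, hδ1, H1⟩ := Metric.eventually_nhds_iff.1 (hgle.and hdiff)
  obtain ⟨δ2, hδ2, H2⟩ := Metric.eventually_nhds_iff.1 (eventually_nhdsWithin_iff.1 hpos)
  set t₁ : ℝ := min δ1 δ2 / 2 with ht₁
  have ht₁0 : 0 < t₁ := by positivity
  have habs : ∀ t : ℝ, 0 ≤ t → t ≤ t₁ → dist t 0 < δ1 ∧ dist t 0 < δ2 := by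
    intro t ht0 htt
    have h1 : t < min δ1 δ2 := lt_of_le_of_lt htt (by rw [ht₁]; exact half_lt_self (by positivity))
    refine ⟨?_, ?_⟩ <;> rw [Real.dist_eq, sub_zero, abs_of_nonneg ht0]
    · exact lt_of_lt_of_le h1 (min_le_left _ _)
    · exact lt_of_lt_of_le h1 (min_le_right _ _)
  have smono : StrictMonoOn (fun s : ℝ => f (x + s • v)) (Set.Icc 0 t₁) := by
    apply strictMonoOn_of_deriv_pos (convex_Icc _ _)
    · intro t ht
      exact ((H1 (habs t ht.1 ht.2).1).2.differentiableAt.continuousAt).continuousWithinAt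
    · intro t ht
      rw [interior_Icc] at ht
      rw [(H1 (habs t ht.1.le (le_of_lt ht.2)).1).2.deriv]
      exact H2 (habs t ht.1.le (le_of_lt ht.2)).2 ht.1
  have hlt2 : f (x + (0:ℝ) • v) < f (x + t₁ • v) :=
    smono (Set.left_mem_Icc.2 ht₁0.le) (Set.right_mem_Icc.2 ht₁0.le) ht₁0
  have hle2 : f (x + t₁ • v) ≤ f x := (H1 (habs t₁ ht₁0.le le_rfl).1).1
  simp only [zero_smul, add_zero] at hlt2
  exact absurd hle2 (not_le.2 hlt2)

private lemma rpow_neg32_of_sq {s : ℝ} (hs : 0 < s) : (s ^ 2 : ℝ) ^ (-3/2 : ℝ) = (s ^ 3)⁻¹ := by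
  rw [← Real.rpow_natCast s 2, ← Real.rpow_mul hs.le]
  norm_num

private lemma calcIneq {a b t : ℝ} (ha : 0 < a) (hb : 0 < b) (ht : 0 < t) :
    a / t - b * t ^ (-3/2 : ℝ) ≤ a ^ 3 / b ^ 2 := by
  have hba : 0 < b / a := by positivity
  have hts : t ^ (3/2 : ℝ) = t * Real.sqrt t := by
    rw [show (3/2 : ℝ) = 1 + 1/2 by norm_num, Real.rpow_add ht, Real.rpow_one,
      ← Real.sqrt_eq_rpow]
  have hneg : t ^ (-3/2 : ℝ) = (t * Real.sqrt t)⁻¹ := by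
    rw [show (-3/2 : ℝ) = -(3/2) by norm_num, Real.rpow_neg ht.le, hts]
  have hst : 0 < Real.sqrt t := Real.sqrt_pos.2 ht
  rcases le_or_gt t ((b/a) ^ 2) with hcase | hcase
  · have h2 : Real.sqrt t ≤ b / a := by
      have := Real.sqrt_le_sqrt hcase
      rwa [Real.sqrt_sq hba.le] at this
    have key : a * Real.sqrt t ≤ b := by
      calc a * Real.sqrt t ≤ a * (b / a) := by nlinarith
        _ = b := by field_simp
    have h3 : a / t ≤ b * (t * Real.sqrt t)⁻¹ := by
      rw [← div_eq_mul_inv, div_le_div_iff₀ ht (by positivity)]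
      nlinarith
    have h4 : (0:ℝ) ≤ a ^ 3 / b ^ 2 := by positivity
    rw [hneg]
    linarith
  · have h1 : a / t ≤ a / ((b/a) ^ 2) := by
      apply div_le_div_of_nonneg_left ha.le (by positivity) hcase.le
    have h2 : a / ((b/a) ^ 2) = a ^ 3 / b ^ 2 := by
      field_simp
    have h3 : (0:ℝ) ≤ b * t ^ (-3/2 : ℝ) := by positivity
    linarith

section Main

set_option maxHeartbeats 4000000 in
/-- A harmonic function on ℝ⁵ bounded above by C(1+|w|)/ρ(w)² off the z-axis (ρ = distance
to the z-axis) which extends smoothly across the axis is bounded above. -/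
theorem stmt16 (γ : EuclideanSpace ℝ (Fin 5) → ℝ) (hsm : ContDiff ℝ (⊤ : ℕ∞) γ)
    (hharm : ∀ w, ∑ i : Fin 5,
      iteratedFDeriv ℝ 2 γ w ![EuclideanSpace.single i (1 : ℝ),
        EuclideanSpace.single i (1 : ℝ)] = 0)
    (C : ℝ)
    (hbound : ∀ w : EuclideanSpace ℝ (Fin 5),
      (∑ i : Fin 5, if i = 0 then 0 else (w i) ^ 2) ≠ 0 →
      γ w ≤ C * (1 + ‖w‖) / (∑ i : Fin 5, if i = 0 then 0 else (w i) ^ 2)) :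
    ∃ M : ℝ, ∀ w, γ w ≤ M := by
  classical
  obtain ⟨C', hC'def⟩ : ∃ C' : ℝ, C' = max C 1 := ⟨_, rfl⟩
  have hC'1 : (1:ℝ) ≤ C' := hC'def ▸ le_max_right _ _
  have hC'C : C ≤ C' := hC'def ▸ le_max_left _ _
  have hC'0 : (0:ℝ) < C' := lt_of_lt_of_le one_pos hC'1
  refine ⟨32 * C' ^ 3 + 9, fun w₀ => ?_⟩
  obtain ⟨R, hRdef⟩ : ∃ R : ℝ, R = 2 * ‖w₀‖ + 2 := ⟨_, rfl⟩
  have hw₀n : (0:ℝ) ≤ ‖w₀‖ := norm_nonneg w₀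
  have hR2 : (2:ℝ) ≤ R := by rw [hRdef]; linarith
  have hR0 : (0:ℝ) < R := by linarith
  have hR1 : (1:ℝ) ≤ R := by linarith
  have hRw₀ : ‖w₀‖ + 2 ≤ R := by rw [hRdef]; linarith
  obtain ⟨pp, hppdef⟩ : ∃ p : E5, p = EuclideanSpace.single 0 R := ⟨_, rfl⟩
  obtain ⟨pm, hpmdef⟩ : ∃ p : E5, p = EuclideanSpace.single 0 (-R) := ⟨_, rfl⟩
  have hnpp : ‖pp‖ = R := by
    rw [hppdef, EuclideanSpace.norm_single]
    exact abs_of_pos hR0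
  have hnpm : ‖pm‖ = R := by
    rw [hpmdef, EuclideanSpace.norm_single, norm_neg]
    exact abs_of_pos hR0
  obtain ⟨ε, hεdef⟩ : ∃ ε : ℝ, ε = 1 / R ^ 2 := ⟨_, rfl⟩
  have hε0 : 0 < ε := by rw [hεdef]; exact div_pos one_pos (pow_pos hR0 2)
  obtain ⟨u, hudef⟩ : ∃ u : E5 → ℝ,
      u = fun w => γ w + (ε * (‖w‖ ^ 2 - R ^ 2) - R ^ 2 * (Kf pp w + Kf pm w)) := ⟨_, rfl⟩
  -- differentiability of u off the poles
  have hudiff : ∀ y : E5, y ≠ pp → y ≠ pm →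
      HasFDerivAt u
        (fderiv ℝ γ y + (ε • (2 • innerSL ℝ y) - R ^ 2 •
          (((-3/2 : ℝ) * (‖y - pp‖ ^ 2) ^ (-5/2 : ℝ)) • (2 • innerSL ℝ (y - pp)) +
           ((-3/2 : ℝ) * (‖y - pm‖ ^ 2) ^ (-5/2 : ℝ)) • (2 • innerSL ℝ (y - pm))))) y := by
    intro y h1 h2
    rw [hudef]
    have hγ : HasFDerivAt γ (fderiv ℝ γ y) y :=
      (hsm.differentiable (by simp) y).hasFDerivAt
    have hN := HasFDerivAt.const_mul ((Nsq_hasFDerivAt y).sub_const (R ^ 2)) ε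
    have hKp := Kf_hasFDerivAt pp h1
    have hKm := Kf_hasFDerivAt pm h2
    have := hγ.add (hN.sub (HasFDerivAt.const_mul (hKp.add hKm) (R ^ 2)))
    convert this using 2
    · rfl
    · rfl
    · rfl
    · rfl
    · rfl
    · simp [smul_smul]
  have hfd_u : ∀ (y : E5), y ≠ pp → y ≠ pm → ∀ v : E5, fderiv ℝ u y v =
      fderiv ℝ γ y v + (ε * (2 * ⟪y, v⟫) - R ^ 2 *
        (((-3/2 : ℝ) * (‖y - pp‖ ^ 2) ^ (-5/2 : ℝ)) * (2 * ⟪y - pp, v⟫) +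
         ((-3/2 : ℝ) * (‖y - pm‖ ^ 2) ^ (-5/2 : ℝ)) * (2 * ⟪y - pm, v⟫))) := by
    intro y h1 h2 v
    rw [(hudiff y h1 h2).fderiv]
    simp only [ContinuousLinearMap.add_apply, ContinuousLinearMap.sub_apply,
      ContinuousLinearMap.smul_apply, innerSL_apply_apply, smul_eq_mul, nsmul_eq_mul, Nat.cast_ofNat]
    try ring
  -- max of γ on the closed ball
  obtain ⟨xB, hxBmem, hxBmax⟩ := (isCompact_closedBall (0:E5) R).exists_isMaxOn
    ⟨0, mem_closedBall_self hR0.le⟩ hsm.continuous.continuousOn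
  obtain ⟨B, hBdef⟩ : ∃ B : ℝ, B = γ xB := ⟨_, rfl⟩
  have hγB : ∀ y ∈ closedBall (0:E5) R, γ y ≤ B := fun y hy => hBdef ▸ hxBmax hy
  have hw₀ball : w₀ ∈ closedBall (0:E5) R := by
    rw [mem_closedBall_zero_iff]; linarith
  have hw₀pp : 2 ≤ dist w₀ pp := by
    have h1 : ‖pp‖ - ‖w₀‖ ≤ ‖pp - w₀‖ := norm_sub_norm_le _ _
    rw [dist_eq_norm, norm_sub_rev]
    rw [hnpp] at h1; linarith
  have hw₀pm : 2 ≤ dist w₀ pm := by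
    have h1 : ‖pm‖ - ‖w₀‖ ≤ ‖pm - w₀‖ := norm_sub_norm_le _ _
    rw [dist_eq_norm, norm_sub_rev]
    rw [hnpm] at h1; linarith
  have hw₀nepp : w₀ ≠ pp := by
    intro h; rw [h, dist_self] at hw₀pp; linarith
  have hw₀nepm : w₀ ≠ pm := by
    intro h; rw [h, dist_self] at hw₀pm; linarith
  have huw₀B : u w₀ ≤ B := by
    have h1 : γ w₀ ≤ B := hγB w₀ hw₀ball
    have h2 : ‖w₀‖ ^ 2 ≤ R ^ 2 := by nlinarith
    have h3 : 0 < Kf pp w₀ := Kf_pos hw₀nepp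
    have h4 : 0 < Kf pm w₀ := Kf_pos hw₀nepm
    have h5 : 0 < R ^ 2 * (Kf pp w₀ + Kf pm w₀) := by
      apply mul_pos (pow_pos hR0 2); linarith
    have h6 : ε * (‖w₀‖ ^ 2 - R ^ 2) ≤ 0 :=
      mul_nonpos_iff.2 (Or.inl ⟨hε0.le, by linarith⟩)
    rw [hudef]; dsimp only; linarith
  obtain ⟨D, hDdef⟩ : ∃ D : ℝ, D = B - u w₀ := ⟨_, rfl⟩
  have hD0 : 0 ≤ D := by rw [hDdef]; linarith
  obtain ⟨η, hηdef⟩ : ∃ η : ℝ, η = min 1 (R ^ 2 / (2 * (D + 1))) := ⟨_, rfl⟩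
  have hη0 : 0 < η := by
    rw [hηdef]
    exact lt_min one_pos (div_pos (pow_pos hR0 2) (by linarith))
  have hη1 : η ≤ 1 := hηdef ▸ min_le_left _ _
  have hη2 : η ≤ R ^ 2 / (2 * (D + 1)) := hηdef ▸ min_le_right _ _
  obtain ⟨Kset, hKsetdef⟩ : ∃ K : Set E5,
      K = closedBall (0:E5) R ∩ ({w | η ≤ dist w pp} ∩ {w | η ≤ dist w pm}) := ⟨_, rfl⟩
  have hKcpt : IsCompact Kset := by
    rw [hKsetdef]
    exact (isCompact_closedBall _ _).inter_right
      (((isClosed_le continuous_const (continuous_id.dist continuous_const))).inter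
        ((isClosed_le continuous_const (continuous_id.dist continuous_const))))
  have hw₀K : w₀ ∈ Kset := by
    rw [hKsetdef]
    exact ⟨hw₀ball, ⟨le_trans (by linarith) hw₀pp, le_trans (by linarith) hw₀pm⟩⟩
  have hKmem : ∀ y ∈ Kset, y ∈ closedBall (0:E5) R ∧ η ≤ dist y pp ∧ η ≤ dist y pm := by
    intro y hy
    rw [hKsetdef] at hy
    exact ⟨hy.1, hy.2.1, hy.2.2⟩
  have hKne : ∀ y ∈ Kset, y ≠ pp ∧ y ≠ pm := by
    intro y hy
    obtain ⟨-, h2, h3⟩ := hKmem y hy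
    constructor
    · intro h; rw [h, dist_self] at h2; exact absurd h2 (not_le.2 hη0)
    · intro h; rw [h, dist_self] at h3; exact absurd h3 (not_le.2 hη0)
  have hKcont : ContinuousOn u Kset := by
    intro y hy
    exact ((hudiff y (hKne y hy).1 (hKne y hy).2).differentiableAt.continuousAt).continuousWithinAt
  obtain ⟨x, hxK, hxmax⟩ := hKcpt.exists_isMaxOn ⟨w₀, hw₀K⟩ hKcont
  have hxb : ‖x‖ ≤ R := by
    have := (hKmem x hxK).1; rwa [mem_closedBall_zero_iff] at this
  have hxpp : η ≤ dist x pp := (hKmem x hxK).2.1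
  have hxpm : η ≤ dist x pm := (hKmem x hxK).2.2
  have hxnepp : x ≠ pp := (hKne x hxK).1
  have hxnepm : x ≠ pm := (hKne x hxK).2
  have huw₀x : u w₀ ≤ u x := hxmax hw₀K
  -- THE KEY BOUND
  have hkey : u x ≤ 8 * C' ^ 3 * (1 + R) ^ 3 / R ^ 4 := by
    by_cases hsph : ‖x‖ = R
    · -- (a) the max is on the sphere: boundary estimate from hbound and the pole barrier
      have hsum0 : (∑ i : Fin 5, if i = (0 : Fin 5) then (0:ℝ) else (x i) ^ 2)
          = R ^ 2 - (x 0) ^ 2 := by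
        have h1 : ∀ i : Fin 5, (if i = (0:Fin 5) then (0:ℝ) else (x i) ^ 2)
            = (x i) ^ 2 - (if i = (0:Fin 5) then (x i) ^ 2 else 0) := by
          intro i; by_cases h : i = 0 <;> simp [h]
        rw [Finset.sum_congr rfl fun i _ => h1 i, Finset.sum_sub_distrib, sum_sq_eq_normsq,
          Finset.sum_ite_eq' Finset.univ (0 : Fin 5) (fun i => (x i) ^ 2), hsph]
        simp
      have hne : (∑ i : Fin 5, if i = (0 : Fin 5) then (0:ℝ) else (x i) ^ 2) ≠ 0 := by
        intro h0
        have hcoord : ∀ i : Fin 5, i ≠ 0 → x i = 0 := by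
          intro i hi
          have hnn : ∀ j ∈ Finset.univ, (0:ℝ) ≤ if j = (0:Fin 5) then (0:ℝ) else (x j) ^ 2 := by
            intro j _
            by_cases h : j = 0 <;> simp [h]
            positivity
          have h3 := (Finset.sum_eq_zero_iff_of_nonneg hnn).1 h0 i (Finset.mem_univ i)
          rw [if_neg hi] at h3
          exact pow_eq_zero_iff two_ne_zero |>.1 h3
        have hz2 : (x 0) ^ 2 = R ^ 2 := by rw [hsum0] at h0; linarith
        have hxs : ∀ pz : ℝ, x 0 = pz → x = EuclideanSpace.single (0 : Fin 5) pz := by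
          intro pz hpz
          apply PiLp.ext
          intro i
          by_cases hi : i = 0
          · subst hi; simp [EuclideanSpace.single_apply, hpz]
          · simp [EuclideanSpace.single_apply, hi, hcoord i hi]
        have hzor : x 0 = R ∨ x 0 = -R := by
          have h4 : (x 0 - R) * (x 0 + R) = 0 := by nlinarith
          rcases mul_eq_zero.1 h4 with h | h
          · left; linarith
          · right; linarith
        rcases hzor with h | h
        · exact hxnepp (by rw [hxs _ h, hppdef])
        · exact hxnepm (by rw [hxs _ h, hpmdef])
      have hnn2 : 0 ≤ (∑ i : Fin 5, if i = (0 : Fin 5) then (0:ℝ) else (x i) ^ 2) := by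
        apply Finset.sum_nonneg
        intro j _
        by_cases h : j = 0 <;> simp [h]
        positivity
      have hpos2 : 0 < R ^ 2 - (x 0) ^ 2 := by
        rw [hsum0] at hnn2 hne
        exact lt_of_le_of_ne hnn2 (Ne.symm hne)
      have hzR : |x 0| < R := by nlinarith [abs_nonneg (x 0), sq_abs (x 0)]
      have htt0 : 0 < R - |x 0| := by linarith
      have hγx : γ x ≤ C' * (1 + R) / (R ^ 2 - (x 0) ^ 2) := by
        have hb := hbound x hne
        rw [hsum0, hsph] at hb
        have hnum : C * (1 + R) ≤ C' * (1 + R) := by nlinarith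
        exact le_trans hb ((div_le_div_iff_of_pos_right hpos2).2 hnum)
      have hKnear : (2 * R * (R - |x 0|) : ℝ) ^ (-3/2 : ℝ) ≤ Kf pp x + Kf pm x := by
        rcases le_or_gt 0 (x 0) with hz0 | hz0
        · have hip : ⟪x, pp⟫ = R * x 0 := by
            rw [hppdef, EuclideanSpace.inner_single_right]
            simp
          have hsq : ‖x - pp‖ ^ 2 = 2 * R * (R - |x 0|) := by
            rw [norm_sub_sq_real, hsph, hip, hnpp, abs_of_nonneg hz0]; ring
          have e : Kf pp x = (2 * R * (R - |x 0|) : ℝ) ^ (-3/2 : ℝ) := by rw [Kf, hsq]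
          have := Kf_pos hxnepm
          linarith
        · have hip : ⟪x, pm⟫ = -(R * x 0) := by
            rw [hpmdef, EuclideanSpace.inner_single_right]
            simp
          have hsq : ‖x - pm‖ ^ 2 = 2 * R * (R - |x 0|) := by
            rw [norm_sub_sq_real, hsph, hip, hnpm, abs_of_neg hz0]; ring
          have e : Kf pm x = (2 * R * (R - |x 0|) : ℝ) ^ (-3/2 : ℝ) := by rw [Kf, hsq]
          have := Kf_pos hxnepp
          linarith
      have hεx : ε * (‖x‖ ^ 2 - R ^ 2) = 0 := by rw [hsph]; ring
      have hux_exp : u x = γ x + ε * (‖x‖ ^ 2 - R ^ 2) - R ^ 2 * (Kf pp x + Kf pm x) := by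
        rw [hudef]; dsimp only; ring
      have hKterm : R ^ 2 * ((2 * R * (R - |x 0|)) ^ (-3/2 : ℝ))
          ≤ R ^ 2 * (Kf pp x + Kf pm x) :=
        mul_le_mul_of_nonneg_left hKnear (by positivity)
      have hstep1 : u x ≤ C' * (1 + R) / (R ^ 2 - (x 0) ^ 2)
          - R ^ 2 * ((2 * R * (R - |x 0|)) ^ (-3/2 : ℝ)) := by
        rw [hux_exp, hεx]
        linarith
      have hden : (R - |x 0|) * R ≤ R ^ 2 - (x 0) ^ 2 := by
        nlinarith [abs_nonneg (x 0), sq_abs (x 0)]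
      have hstep2 : C' * (1 + R) / (R ^ 2 - (x 0) ^ 2) ≤ C' * (1 + R) / ((R - |x 0|) * R) :=
        div_le_div_of_nonneg_left (by nlinarith) (by nlinarith) hden
      have hsplit : ((2 * R * (R - |x 0|)) : ℝ) ^ (-3/2 : ℝ)
          = ((2 * R) : ℝ) ^ (-3/2 : ℝ) * ((R - |x 0|) : ℝ) ^ (-3/2 : ℝ) :=
        Real.mul_rpow (by linarith) htt0.le
      have ha0 : 0 < C' * (1 + R) / R := div_pos (by nlinarith) hR0
      have hb0 : 0 < R ^ 2 * ((2 * R) : ℝ) ^ (-3/2 : ℝ) :=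
        mul_pos (pow_pos hR0 2) (Real.rpow_pos_of_pos (by linarith) _)
      have hfrac : C' * (1 + R) / ((R - |x 0|) * R) = (C' * (1 + R) / R) / (R - |x 0|) := by
        field_simp
      have hbt : R ^ 2 * ((2 * R * (R - |x 0|)) ^ (-3/2 : ℝ))
          = (R ^ 2 * ((2 * R) : ℝ) ^ (-3/2 : ℝ)) * ((R - |x 0|) : ℝ) ^ (-3/2 : ℝ) := by
        rw [hsplit]; ring
      have hval : (C' * (1 + R) / R) ^ 3 / (R ^ 2 * ((2 * R) : ℝ) ^ (-3/2 : ℝ)) ^ 2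
          = 8 * C' ^ 3 * (1 + R) ^ 3 / R ^ 4 := by
        have hsq2 : (((2 * R) : ℝ) ^ (-3/2 : ℝ)) ^ 2 = ((2 * R) ^ 3 : ℝ)⁻¹ := by
          rw [← Real.rpow_natCast (((2 * R) : ℝ) ^ (-3/2 : ℝ)) 2,
            ← Real.rpow_mul (by linarith : (0:ℝ) ≤ 2 * R)]
          norm_num
        rw [mul_pow, hsq2]
        rw [div_pow, div_div]
        rw [eq_div_iff (by positivity)]
        field_simp
        ring
      calc u x ≤ C' * (1 + R) / (R ^ 2 - (x 0) ^ 2)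
            - R ^ 2 * ((2 * R * (R - |x 0|)) ^ (-3/2 : ℝ)) := hstep1
        _ ≤ (C' * (1 + R) / R) / (R - |x 0|)
            - (R ^ 2 * ((2 * R) : ℝ) ^ (-3/2 : ℝ)) * ((R - |x 0|) : ℝ) ^ (-3/2 : ℝ) := by
          have h5 : C' * (1 + R) / (R ^ 2 - (x 0) ^ 2)
              ≤ (C' * (1 + R) / R) / (R - |x 0|) := by
            rw [← hfrac]; exact hstep2
          rw [← hbt]
          linarith
        _ ≤ (C' * (1 + R) / R) ^ 3 / (R ^ 2 * ((2 * R) : ℝ) ^ (-3/2 : ℝ)) ^ 2 :=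
          calcIneq ha0 hb0 htt0
        _ = 8 * C' ^ 3 * (1 + R) ^ 3 / R ^ 4 := hval
    · have hxlt : ‖x‖ < R := lt_of_le_of_ne hxb hsph
      by_cases hbd : dist x pp = η ∨ dist x pm = η
      · -- (c) the max point cannot be on the small spheres around the poles
        exfalso
        have hKbig : (η ^ 2 : ℝ) ^ (-3/2 : ℝ) ≤ Kf pp x + Kf pm x := by
          rcases hbd with h | h
          · have hn : ‖x - pp‖ = η := by rw [← dist_eq_norm]; exact h
            have e : Kf pp x = (η ^ 2 : ℝ) ^ (-3/2 : ℝ) := by rw [Kf, hn]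
            have := Kf_pos hxnepm
            linarith
          · have hn : ‖x - pm‖ = η := by rw [← dist_eq_norm]; exact h
            have e : Kf pm x = (η ^ 2 : ℝ) ^ (-3/2 : ℝ) := by rw [Kf, hn]
            have := Kf_pos hxnepp
            linarith
        have hγxB : γ x ≤ B := hγB x (hKmem x hxK).1
        have hsqx : ‖x‖ ^ 2 ≤ R ^ 2 := by nlinarith [norm_nonneg x]
        have hεxle : ε * (‖x‖ ^ 2 - R ^ 2) ≤ 0 :=
          mul_nonpos_iff.2 (Or.inl ⟨hε0.le, by linarith⟩)
        have hη3 : η ^ 3 ≤ η := by nlinarith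
        have hrp : (η ^ 2 : ℝ) ^ (-3/2 : ℝ) = (η ^ 3)⁻¹ := rpow_neg32_of_sq hη0
        have hbig : 2 * (D + 1) ≤ R ^ 2 * (η ^ 3)⁻¹ := by
          have h1 : η ^ 3 ≤ R ^ 2 / (2 * (D + 1)) := le_trans hη3 hη2
          rw [le_div_iff₀ (by linarith : (0:ℝ) < 2 * (D + 1))] at h1
          rw [← div_eq_mul_inv, le_div_iff₀ (pow_pos hη0 3)]
          linarith
        have h2 : R ^ 2 * ((η ^ 2 : ℝ) ^ (-3/2 : ℝ)) ≤ R ^ 2 * (Kf pp x + Kf pm x) :=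
          mul_le_mul_of_nonneg_left hKbig (by positivity)
        rw [hrp] at h2
        have hux2 : u x ≤ B - 2 * (D + 1) := by
          have he : u x = γ x + ε * (‖x‖ ^ 2 - R ^ 2) - R ^ 2 * (Kf pp x + Kf pm x) := by
            rw [hudef]; dsimp only; ring
          rw [he]
          linarith
        have huw0 : u w₀ = B - D := by rw [hDdef]; ring
        rw [huw0] at huw₀x
        linarith
      · -- (b) interior maximum: contradiction with the strictly positive Laplacian
        exfalso
        push_neg at hbd
        have hgtp : η < dist x pp := lt_of_le_of_ne hxpp (Ne.symm hbd.1)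
        have hgtm : η < dist x pm := lt_of_le_of_ne hxpm (Ne.symm hbd.2)
        have hVopen : IsOpen (ball (0:E5) R ∩ ({w | η < dist w pp} ∩ {w | η < dist w pm})) :=
          isOpen_ball.inter
            ((isOpen_lt continuous_const (continuous_id.dist continuous_const)).inter
             (isOpen_lt continuous_const (continuous_id.dist continuous_const)))
        have hxV : x ∈ ball (0:E5) R ∩ ({w | η < dist w pp} ∩ {w | η < dist w pm}) :=
          ⟨mem_ball_zero_iff.2 hxlt, hgtp, hgtm⟩
        have hVsub : ball (0:E5) R ∩ ({w | η < dist w pp} ∩ {w | η < dist w pm}) ⊆ Kset := by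
          intro y hy
          rw [hKsetdef]
          exact ⟨ball_subset_closedBall hy.1,
            le_of_lt (show η < dist y pp from hy.2.1),
            le_of_lt (show η < dist y pm from hy.2.2)⟩
        have hlocmax : IsLocalMax u x := by
          filter_upwards [hVopen.mem_nhds hxV] with y hy
          exact hxmax (hVsub hy)
        have hev : ∀ᶠ y in 𝓝 x, DifferentiableAt ℝ u y := by
          filter_upwards [eventually_ne_nhds hxnepp, eventually_ne_nhds hxnepm] with y h1 h2
          exact (hudiff y h1 h2).differentiableAt
        have hci : ∀ i : Fin 5,
            HasDerivAt (fun t : ℝ => fderiv ℝ u (x + t • ee i) (ee i))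
              (fderiv ℝ (fderiv ℝ γ) x (ee i) (ee i) +
                (ε * (2 * ⟪ee i, ee i⟫) - R ^ 2 * (d2K pp x (ee i) + d2K pm x (ee i)))) 0 := by
          intro i
          have hform := (gamma_line hsm x (ee i)).add
            ((HasDerivAt.const_mul ε (NsqLine_hasDerivAt x (ee i))).sub
              (HasDerivAt.const_mul (R ^ 2)
                ((KfLine_hasDerivAt pp x (ee i) hxnepp).add
                 (KfLine_hasDerivAt pm x (ee i) hxnepm))))
          have htend : Tendsto (fun t : ℝ => x + t • ee i) (𝓝 0) (𝓝 x) := by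
            have hco : Continuous fun t : ℝ => x + t • ee i :=
              continuous_const.add (continuous_id.smul continuous_const)
            simpa using hco.tendsto 0
          refine HasDerivAt.congr_of_eventuallyEq hform ?_
          filter_upwards [htend.eventually (eventually_ne_nhds hxnepp),
            htend.eventually (eventually_ne_nhds hxnepm)] with t h1 h2
          exact hfd_u _ h1 h2 (ee i)
        have hle : ∀ i : Fin 5, fderiv ℝ (fderiv ℝ γ) x (ee i) (ee i) +
            (ε * (2 * ⟪ee i, ee i⟫) - R ^ 2 * (d2K pp x (ee i) + d2K pm x (ee i))) ≤ 0 :=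
          fun i => secondDerivTest hev (hci i) hlocmax
        have hlap : ∑ i, fderiv ℝ (fderiv ℝ γ) x (ee i) (ee i) = 0 := by
          have h := hharm x
          simp only [iteratedFDeriv_two_apply, Matrix.cons_val_zero, Matrix.cons_val_one,
            Matrix.head_cons] at h
          simpa [ee] using h
        have h1 : ∑ i : Fin 5, ε * (2 * ⟪ee i, ee i⟫) = 10 * ε := by
          rw [Finset.sum_congr rfl (fun i _ => by rw [inner_ee_self i])]
          simp
          ring
        have h2 : ∑ i : Fin 5, (d2K pp x (ee i) + d2K pm x (ee i)) = 0 := by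
          rw [Finset.sum_add_distrib, d2K_trace pp x hxnepp, d2K_trace pm x hxnepm]; ring
        have hsum : ∑ i : Fin 5, (fderiv ℝ (fderiv ℝ γ) x (ee i) (ee i) +
            (ε * (2 * ⟪ee i, ee i⟫) - R ^ 2 * (d2K pp x (ee i) + d2K pm x (ee i)))) = 10 * ε := by
          rw [Finset.sum_add_distrib, hlap, Finset.sum_sub_distrib, h1, ← Finset.mul_sum, h2]
          ring
        have hsum_le : ∑ i : Fin 5, (fderiv ℝ (fderiv ℝ γ) x (ee i) (ee i) +
            (ε * (2 * ⟪ee i, ee i⟫) - R ^ 2 * (d2K pp x (ee i) + d2K pm x (ee i)))) ≤ 0 :=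
          Finset.sum_nonpos (fun i _ => hle i)
        rw [hsum] at hsum_le
        nlinarith
  -- final assembly
  have hKw₀ : R ^ 2 * (Kf pp w₀ + Kf pm w₀) ≤ 8 := by
    have hhalf : 0 < R / 2 := by linarith
    have hb : ∀ p : E5, ‖p‖ = R → Kf p w₀ ≤ 8 / R ^ 3 := by
      intro p hp
      have h1 : R / 2 ≤ ‖w₀ - p‖ := by
        have h2 : ‖p‖ - ‖w₀‖ ≤ ‖p - w₀‖ := norm_sub_norm_le _ _
        rw [norm_sub_rev, hp] at h2
        rw [hRdef] at h2 ⊢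
        linarith
      have h3 : (R/2) ^ 2 ≤ ‖w₀ - p‖ ^ 2 := by nlinarith [norm_nonneg (w₀ - p)]
      have h4 : Kf p w₀ ≤ ((R/2) ^ 2) ^ (-3/2 : ℝ) := by
        rw [Kf]
        exact Real.rpow_le_rpow_of_nonpos (by positivity) h3 (by norm_num)
      have h5 : ((R/2) ^ 2 : ℝ) ^ (-3/2 : ℝ) = ((R/2) ^ 3)⁻¹ := rpow_neg32_of_sq hhalf
      have h6 : ((R/2) ^ 3 : ℝ)⁻¹ = 8 / R ^ 3 := by
        field_simp
        ring
      rw [h5, h6] at h4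
      exact h4
    have hKp := hb pp hnpp
    have hKm := hb pm hnpm
    have h7 : R ^ 2 * (Kf pp w₀ + Kf pm w₀) ≤ R ^ 2 * (8 / R ^ 3 + 8 / R ^ 3) :=
      mul_le_mul_of_nonneg_left (by linarith) (by positivity)
    have h8 : R ^ 2 * (8 / R ^ 3 + 8 / R ^ 3 : ℝ) = 16 / R := by
      field_simp
      ring
    have h9 : 16 / R ≤ 8 := by
      rw [div_le_iff₀ hR0]; linarith
    rw [h8] at h7
    exact h7.trans h9
  have hSb : 8 * C' ^ 3 * (1 + R) ^ 3 / R ^ 4 ≤ 32 * C' ^ 3 := by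
    rw [div_le_iff₀ (by positivity)]
    have h1 : (1 + R) ^ 3 ≤ 8 * R ^ 3 := by nlinarith
    nlinarith [mul_le_mul_of_nonneg_left h1 (le_of_lt (pow_pos hC'0 3)),
      mul_nonneg (mul_nonneg (pow_pos hC'0 3).le (pow_pos hR0 3).le)
        (by linarith : (0:ℝ) ≤ R - 2)]
  have hεR : ε * R ^ 2 = 1 := by
    rw [hεdef]; field_simp
  have hu_expand : γ w₀ = u w₀ - ε * (‖w₀‖ ^ 2 - R ^ 2) + R ^ 2 * (Kf pp w₀ + Kf pm w₀) := by
    rw [hudef]; dsimp only; ring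
  have hεterm : -(ε * (‖w₀‖ ^ 2 - R ^ 2)) ≤ 1 := by
    have h1 : 0 ≤ ε * ‖w₀‖ ^ 2 := mul_nonneg hε0.le (sq_nonneg _)
    nlinarith
  calc γ w₀ = u w₀ - ε * (‖w₀‖ ^ 2 - R ^ 2) + R ^ 2 * (Kf pp w₀ + Kf pm w₀) := hu_expand
    _ = u w₀ + (-(ε * (‖w₀‖ ^ 2 - R ^ 2))) + R ^ 2 * (Kf pp w₀ + Kf pm w₀) := by ring
    _ ≤ u x + 1 + 8 := add_le_add (add_le_add huw₀x hεterm) hKw₀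
    _ ≤ (32 * C' ^ 3) + 1 + 8 := add_le_add (add_le_add (le_trans hkey hSb) le_rfl) le_rfl
    _ = 32 * C' ^ 3 + 9 := by ring

end Main

end Stmt16Aux
end

section
/- Suppose U : ℝ × (0,∞) → ℝ satisfies the axi-symmetric harmonic equation U_ρρ + U_zz + U_ρ/ρ = 0 and, near a boundary segment, admits an expansion U(z,ρ) = S₀(z) + f(z)·log(ρ²) + ρ·S₂(z,ρ) with f affine (f'' = 0), S₀ twice differentiable, and S₂ smooth up to ρ = 0. Then S₂(z,0) = 0, i.e., S₂(z,ρ) = O(ρ) as ρ → 0. -/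
open Set Topology Filter

/-- If an axi-symmetric harmonic function admits the expansion
U = S₀(z) + f(z) log(ρ²) + ρ S₂(z,ρ) with f affine, S₀ twice differentiable and S₂ smooth
up to ρ = 0, then S₂(z,0) = 0, i.e. S₂ = O(ρ). -/
theorem stmt19 (U S₂ : ℝ → ℝ → ℝ) (S₀ f : ℝ → ℝ) (b c : ℝ)
    (heq : ∀ z ρ : ℝ, 0 < ρ →
      deriv (fun s => deriv (U z) s) ρ +
        deriv (fun t => deriv (fun t' => U t' ρ) t) z + deriv (U z) ρ / ρ = 0)
    (hf : ∀ z, f z = b * z + c)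
    (hS₀ : ContDiff ℝ 2 S₀)
    (hS₂ : ContDiffOn ℝ (⊤ : ℕ∞) (fun p : ℝ × ℝ => S₂ p.1 p.2) (Set.univ ×ˢ Set.Ici (0 : ℝ)))
    (hexp : ∀ z ρ : ℝ, 0 < ρ → U z ρ = S₀ z + f z * Real.log (ρ ^ 2) + ρ * S₂ z ρ) :
    ∀ z, S₂ z 0 = 0 := by
  intro z
  set S : Set (ℝ × ℝ) := Set.univ ×ˢ Set.Ici (0 : ℝ) with hSdef
  have hUniq : UniqueDiffOn ℝ S := uniqueDiffOn_univ.prod (uniqueDiffOn_Ici 0)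
  set F : ℝ × ℝ → ℝ := fun p => S₂ p.1 p.2 with hFdef
  set F' := fderivWithin ℝ F S with hF'def
  set F'' := fderivWithin ℝ F' S with hF''def
  have hCF' : ContDiffOn ℝ (⊤ : ℕ∞) F' S := hS₂.fderivWithin hUniq (by simp)
  have hCF'' : ContDiffOn ℝ (⊤ : ℕ∞) F'' S := hCF'.fderivWithin hUniq (by simp)
  have hnhds : ∀ t ρ : ℝ, 0 < ρ → S ∈ 𝓝 ((t, ρ) : ℝ × ℝ) := by
    intro t ρ hρ
    rw [mem_nhds_iff]
    exact ⟨univ ×ˢ Ioi 0, prod_mono_right Ioi_subset_Ici_self,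
      isOpen_univ.prod isOpen_Ioi, ⟨trivial, hρ⟩⟩
  have hmemS : ∀ t ρ : ℝ, 0 ≤ ρ → ((t, ρ) : ℝ × ℝ) ∈ S := fun t ρ h => ⟨trivial, h⟩
  have hFd : ∀ t ρ : ℝ, 0 < ρ → HasFDerivAt F (F' (t, ρ)) (t, ρ) := by
    intro t ρ hρ
    have h1 : DifferentiableAt ℝ F (t, ρ) :=
      ((hS₂.differentiableOn (by simp)).differentiableAt (hnhds t ρ hρ))
    have h2 : F' (t, ρ) = fderiv ℝ F (t, ρ) := by
      rw [hF'def]; exact fderivWithin_of_mem_nhds (hnhds t ρ hρ)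
    rw [h2]; exact h1.hasFDerivAt
  have hF'd : ∀ t ρ : ℝ, 0 < ρ → HasFDerivAt F' (F'' (t, ρ)) (t, ρ) := by
    intro t ρ hρ
    have h1 : DifferentiableAt ℝ F' (t, ρ) :=
      ((hCF'.differentiableOn (by simp)).differentiableAt (hnhds t ρ hρ))
    have h2 : F'' (t, ρ) = fderiv ℝ F' (t, ρ) := by
      rw [hF''def]; exact fderivWithin_of_mem_nhds (hnhds t ρ hρ)
    rw [h2]; exact h1.hasFDerivAt
  -- partial derivative facts (interior)
  have hd2 : ∀ t ρ : ℝ, 0 < ρ → HasDerivAt (fun s => S₂ t s) (F' (t, ρ) (0, 1)) ρ := by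
    intro t ρ hρ
    have h := (hFd t ρ hρ).comp_hasDerivAt ρ
      (HasDerivAt.prodMk (hasDerivAt_const ρ t) (hasDerivAt_id ρ))
    simpa [hFdef, Function.comp_def] using h
  have hd1 : ∀ t ρ : ℝ, 0 < ρ → HasDerivAt (fun t' => S₂ t' ρ) (F' (t, ρ) (1, 0)) t := by
    intro t ρ hρ
    have h := (hFd t ρ hρ).comp_hasDerivAt t
      (HasDerivAt.prodMk (hasDerivAt_id t) (hasDerivAt_const t ρ))
    simpa [hFdef, Function.comp_def] using h
  have hd22 : ∀ ρ : ℝ, 0 < ρ →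
      HasDerivAt (fun s => F' (z, s) (0, 1)) ((F'' (z, ρ) (0, 1)) (0, 1)) ρ := by
    intro ρ hρ
    have h := (hF'd z ρ hρ).comp_hasDerivAt ρ
      (HasDerivAt.prodMk (hasDerivAt_const ρ z) (hasDerivAt_id ρ))
    have h2 := h.clm_apply (hasDerivAt_const ρ (((0 : ℝ), (1 : ℝ)) : ℝ × ℝ))
    simpa using h2
  have hd11 : ∀ ρ : ℝ, 0 < ρ →
      HasDerivAt (fun t => F' (t, ρ) (1, 0)) ((F'' (z, ρ) (1, 0)) (1, 0)) z := by
    intro ρ hρ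
    have h := (hF'd z ρ hρ).comp_hasDerivAt z
      (HasDerivAt.prodMk (hasDerivAt_id z) (hasDerivAt_const z ρ))
    have h2 := h.clm_apply (hasDerivAt_const z (((1 : ℝ), (0 : ℝ)) : ℝ × ℝ))
    simpa using h2
  -- (A) first ρ-derivative of U
  have hA : ∀ ρ : ℝ, 0 < ρ →
      HasDerivAt (U z) (f z * (2 / ρ) + (S₂ z ρ + ρ * F' (z, ρ) (0, 1))) ρ := by
    intro ρ hρ
    have hev : (fun s => S₀ z + f z * Real.log (s ^ 2) + s * S₂ z s) =ᶠ[𝓝 ρ] U z := by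
      filter_upwards [Ioi_mem_nhds hρ] with s hs
      exact (hexp z s hs).symm
    have hlog : HasDerivAt (fun s : ℝ => Real.log (s ^ 2)) (2 / ρ) ρ := by
      have h1 : HasDerivAt (fun s : ℝ => s ^ 2) (2 * ρ) ρ := by
        simpa using hasDerivAt_pow 2 ρ
      have h2 := h1.log (by positivity : ρ ^ 2 ≠ 0)
      convert h2 using 1
      field_simp
    have hmain : HasDerivAt (fun s => S₀ z + f z * Real.log (s ^ 2) + s * S₂ z s)
        (f z * (2 / ρ) + (S₂ z ρ + ρ * F' (z, ρ) (0, 1))) ρ := by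
      have h := ((hasDerivAt_const ρ (S₀ z)).add (hlog.const_mul (f z))).add
        ((hasDerivAt_id ρ).mul (hd2 z ρ hρ))
      convert h using 1
      any_goals rfl
      simp only [id_eq]
      ring
    exact hmain.congr_of_eventuallyEq hev.symm
  -- (B) second ρ-derivative
  have hB : ∀ ρ : ℝ, 0 < ρ → deriv (fun s => deriv (U z) s) ρ
      = f z * (2 * (-(ρ ^ 2)⁻¹)) + (2 * F' (z, ρ) (0, 1) + ρ * (F'' (z, ρ) (0, 1)) (0, 1)) := by
    intro ρ hρ
    have hev : (fun s => f z * (2 / s) + (S₂ z s + s * F' (z, s) (0, 1)))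
        =ᶠ[𝓝 ρ] (fun s => deriv (U z) s) := by
      filter_upwards [Ioi_mem_nhds hρ] with s hs
      exact ((hA s hs).deriv).symm
    rw [← hev.deriv_eq]
    have hinv : HasDerivAt (fun s : ℝ => f z * (2 / s)) (f z * (2 * (-(ρ ^ 2)⁻¹))) ρ := by
      have h1 : HasDerivAt (fun s : ℝ => 2 / s) (2 * (-(ρ ^ 2)⁻¹)) ρ := by
        simpa [div_eq_mul_inv] using (hasDerivAt_inv hρ.ne').const_mul (2 : ℝ)
      exact h1.const_mul (f z)
    have h := hinv.add ((hd2 z ρ hρ).add ((hasDerivAt_id ρ).mul (hd22 ρ hρ)))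
    have h' : HasDerivAt (fun s => f z * (2 / s) + (S₂ z s + s * F' (z, s) (0, 1)))
        (f z * (2 * (-(ρ ^ 2)⁻¹)) + (2 * F' (z, ρ) (0, 1) + ρ * (F'' (z, ρ) (0, 1)) (0, 1))) ρ := by
      convert h using 1
      any_goals rfl
      simp only [id_eq]
      ring
    exact h'.deriv
  -- (C) second z-derivative
  have hC : ∀ ρ : ℝ, 0 < ρ → deriv (fun t => deriv (fun t' => U t' ρ) t) z
      = deriv (deriv S₀) z + ρ * (F'' (z, ρ) (1, 0)) (1, 0) := by
    intro ρ hρ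
    have hS₀' : Differentiable ℝ S₀ := hS₀.differentiable (by norm_num)
    have hdS₀ : Differentiable ℝ (deriv S₀) := by
      have h2 : ContDiff ℝ ((1 : ℕ∞) + 1) S₀ := by
        convert hS₀ using 2
        norm_num
      exact (contDiff_succ_iff_deriv.mp h2).2.2.differentiable (by simp)
    have hinner : (fun t => deriv (fun t' => U t' ρ) t)
        = fun t => deriv S₀ t + b * Real.log (ρ ^ 2) + ρ * F' (t, ρ) (1, 0) := by
      funext t
      have hfz : (fun t' => U t' ρ)
          = fun t' => S₀ t' + (b * t' + c) * Real.log (ρ ^ 2) + ρ * S₂ t' ρ := by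
        funext t'; rw [hexp t' ρ hρ, hf t']
      rw [hfz]
      have hS0 : HasDerivAt S₀ (deriv S₀ t) t := (hS₀'.differentiableAt).hasDerivAt
      have hlin : HasDerivAt (fun t' : ℝ => (b * t' + c) * Real.log (ρ ^ 2))
          (b * Real.log (ρ ^ 2)) t := by
        have h1 : HasDerivAt (fun t' : ℝ => b * t' + c) b t := by
          simpa using ((hasDerivAt_id t).const_mul b).add_const c
        exact h1.mul_const (Real.log (ρ ^ 2))
      have hS2t : HasDerivAt (fun t' => ρ * S₂ t' ρ) (ρ * F' (t, ρ) (1, 0)) t :=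
        (hd1 t ρ hρ).const_mul ρ
      exact ((hS0.add hlin).add hS2t).deriv
    rw [hinner]
    have h1 : HasDerivAt (deriv S₀) (deriv (deriv S₀) z) z :=
      (hdS₀.differentiableAt).hasDerivAt
    have h := (h1.add_const (b * Real.log (ρ ^ 2))).add ((hd11 ρ hρ).const_mul ρ)
    exact h.deriv
  -- key identity
  have key : ∀ ρ : ℝ, 0 < ρ → S₂ z ρ =
      -ρ * (3 * F' (z, ρ) (0, 1) + ρ * (F'' (z, ρ) (0, 1)) (0, 1)
        + deriv (deriv S₀) z + ρ * (F'' (z, ρ) (1, 0)) (1, 0)) := by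
    intro ρ hρ
    have h := heq z ρ hρ
    rw [hB ρ hρ, hC ρ hρ, (hA ρ hρ).deriv] at h
    have hρ' : ρ ≠ 0 := hρ.ne'
    field_simp at h
    have h3 : ρ ^ 3 * S₂ z ρ = ρ ^ 3 * (-ρ * (3 * F' (z, ρ) (0, 1)
        + ρ * (F'' (z, ρ) (0, 1)) (0, 1) + deriv (deriv S₀) z
        + ρ * (F'' (z, ρ) (1, 0)) (1, 0))) := by linear_combination ρ ^ 2 * h
    exact mul_left_cancel₀ (pow_ne_zero 3 hρ') h3
  -- limits
  have hcontF : ContinuousWithinAt F S (z, 0) := hS₂.continuousOn _ (hmemS z 0 le_rfl)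
  have hcontF' : ContinuousWithinAt F' S (z, 0) := hCF'.continuousOn _ (hmemS z 0 le_rfl)
  have hcontF'' : ContinuousWithinAt F'' S (z, 0) := hCF''.continuousOn _ (hmemS z 0 le_rfl)
  have hpath : Tendsto (fun ρ : ℝ => ((z, ρ) : ℝ × ℝ)) (𝓝[>] (0 : ℝ)) (𝓝[S] ((z, 0) : ℝ × ℝ)) := by
    rw [tendsto_nhdsWithin_iff]
    constructor
    · exact ((continuous_const.prodMk continuous_id).tendsto (0 : ℝ)).mono_left nhdsWithin_le_nhds
    · filter_upwards [self_mem_nhdsWithin] with ρ hρ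
      exact hmemS z ρ (le_of_lt hρ)
  have h1 : Tendsto (fun ρ : ℝ => S₂ z ρ) (𝓝[>] (0 : ℝ)) (𝓝 (S₂ z 0)) :=
    hcontF.tendsto.comp hpath
  have hT' : Tendsto (fun ρ : ℝ => F' (z, ρ)) (𝓝[>] (0 : ℝ)) (𝓝 (F' (z, 0))) :=
    hcontF'.tendsto.comp hpath
  have hT'' : Tendsto (fun ρ : ℝ => F'' (z, ρ)) (𝓝[>] (0 : ℝ)) (𝓝 (F'' (z, 0))) :=
    hcontF''.tendsto.comp hpath
  have e1 : Tendsto (fun ρ : ℝ => F' (z, ρ) (0, 1)) (𝓝[>] (0 : ℝ)) (𝓝 (F' (z, 0) (0, 1))) :=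
    ((ContinuousLinearMap.apply ℝ ℝ (((0 : ℝ), (1 : ℝ)) : ℝ × ℝ)).continuous.tendsto _).comp hT'
  have e2 : Tendsto (fun ρ : ℝ => (F'' (z, ρ) (0, 1)) (0, 1)) (𝓝[>] (0 : ℝ))
      (𝓝 ((F'' (z, 0) (0, 1)) (0, 1))) := by
    have ha := ((ContinuousLinearMap.apply ℝ (ℝ × ℝ →L[ℝ] ℝ)
      (((0 : ℝ), (1 : ℝ)) : ℝ × ℝ)).continuous.tendsto _).comp hT''
    exact ((ContinuousLinearMap.apply ℝ ℝ (((0 : ℝ), (1 : ℝ)) : ℝ × ℝ)).continuous.tendsto _).comp ha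
  have e3 : Tendsto (fun ρ : ℝ => (F'' (z, ρ) (1, 0)) (1, 0)) (𝓝[>] (0 : ℝ))
      (𝓝 ((F'' (z, 0) (1, 0)) (1, 0))) := by
    have ha := ((ContinuousLinearMap.apply ℝ (ℝ × ℝ →L[ℝ] ℝ)
      (((1 : ℝ), (0 : ℝ)) : ℝ × ℝ)).continuous.tendsto _).comp hT''
    exact ((ContinuousLinearMap.apply ℝ ℝ (((1 : ℝ), (0 : ℝ)) : ℝ × ℝ)).continuous.tendsto _).comp ha
  have hρ0 : Tendsto (fun ρ : ℝ => ρ) (𝓝[>] (0 : ℝ)) (𝓝 (0 : ℝ)) :=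
    tendsto_id.mono_left nhdsWithin_le_nhds
  have hbr : Tendsto (fun ρ : ℝ => 3 * F' (z, ρ) (0, 1) + ρ * (F'' (z, ρ) (0, 1)) (0, 1)
      + deriv (deriv S₀) z + ρ * (F'' (z, ρ) (1, 0)) (1, 0)) (𝓝[>] (0 : ℝ))
      (𝓝 (3 * F' (z, 0) (0, 1) + 0 * (F'' (z, 0) (0, 1)) (0, 1)
        + deriv (deriv S₀) z + 0 * (F'' (z, 0) (1, 0)) (1, 0))) :=
    (((e1.const_mul 3).add (hρ0.mul e2)).add tendsto_const_nhds).add (hρ0.mul e3)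
  have h2 : Tendsto (fun ρ : ℝ => -ρ * (3 * F' (z, ρ) (0, 1) + ρ * (F'' (z, ρ) (0, 1)) (0, 1)
      + deriv (deriv S₀) z + ρ * (F'' (z, ρ) (1, 0)) (1, 0))) (𝓝[>] (0 : ℝ)) (𝓝 0) := by
    have := (hρ0.neg).mul hbr
    simpa using this
  have h1' : Tendsto (fun ρ : ℝ => S₂ z ρ) (𝓝[>] (0 : ℝ)) (𝓝 0) := by
    refine h2.congr' ?_
    filter_upwards [self_mem_nhdsWithin] with ρ hρ
    exact (key ρ hρ).symm
  exact tendsto_nhds_unique h1 h1'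
end
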